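/- arXiv:2001.03192 — 6 statements merged into one kernel-verified Lean document; each statement's English description precedes it below -/
import Mathlib

section
/- Let X and Y be independent real-valued random variables on a probability space, and let β and γ be real numbers with 0 < β < γ, such that |X| ≤ β almost surely and Y is uniformly distributed on the interval [-γ, γ]. Then the mutual information between X and X+Y satisfies I(X; X+Y) ≤ (β/γ)·ln 2 (that is, at most β/γ bits). -/
/-!
Conditionally on `X = x`, the output `W = X + Y` is uniform on `[x - γ, x + γ]`, so the joint
law of `(X, W)` has density `(2γ)⁻¹ 𝟙{|w - x| ≤ γ}` against `law X ⊗ volume`, and `W` has density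
`(2γ)⁻¹ G(w)` with `G(w) = P(|X - w| ≤ γ)`. The log-likelihood ratio is therefore `-log G(w)` on
the support, and `I(X; W) = (2γ)⁻¹ ∫ -G log G`.

Since `|X| ≤ β`, `G = 1` on `|w| ≤ γ - β` and `G = 0` on `|w| > γ + β`, while `∫ G = 2γ`.
On the remaining region (of length `4β`) bound `-G log G` by its tangent line at `1/2`; the total
mass `∫ G = 2γ` turns the linear term into the constant needed for `∫ -G log G ≤ 2β log 2`.
-/

open MeasureTheory ProbabilityTheory
open scoped Classical

/-- The Kullback–Leibler divergence between two measures, in nats: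
the integral of the log-likelihood ratio when `μ ≪ ν` and the ratio is integrable,
and `⊤` otherwise. -/
noncomputable def klDiv {α : Type*} [MeasurableSpace α] (μ ν : Measure α) : EReal :=
  if μ ≪ ν ∧ Integrable (llr μ ν) μ then ((∫ x, llr μ ν x ∂μ : ℝ) : EReal) else ⊤

/-- The mutual information `I(X; W)` (in nats) between two random variables on a common
probability space: the KL divergence of the law of the pair `(X, W)` from the product
of the laws of `X` and of `W`. -/
noncomputable def mutualInfo {Ω α β : Type*} [MeasurableSpace Ω] [MeasurableSpace α]
    [MeasurableSpace β] (μ : Measure Ω) (X : Ω → α) (W : Ω → β) : EReal :=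
  klDiv (μ.map (fun ω => (X ω, W ω))) ((μ.map X).prod (μ.map W))

open Set Real Metric
open scoped ENNReal

section KullbackLeibler

variable {α : Type*} [MeasurableSpace α] {P : Measure α} [SigmaFinite P] {ρ : α → ℝ≥0∞}

lemma llr_withDensity_ae_eq (hρ : Measurable ρ) :
    llr (P.withDensity ρ) P =ᵐ[P.withDensity ρ] fun x => log (ρ x).toReal := by
  filter_upwards [(withDensity_absolutelyContinuous P ρ).ae_le (Measure.rnDeriv_withDensity P hρ)]
    with x hx
  simp only [llr_def, hx]

lemma klDiv_withDensity_of_integrable (hρ : Measurable ρ)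
    (hint : Integrable (fun x => log (ρ x).toReal) (P.withDensity ρ)) :
    klDiv (P.withDensity ρ) P = ((∫ x, log (ρ x).toReal ∂P.withDensity ρ : ℝ) : EReal) := by
  have hllr := llr_withDensity_ae_eq (P := P) hρ
  rw [klDiv, if_pos ⟨withDensity_absolutelyContinuous P ρ, hint.congr hllr.symm⟩,
    integral_congr_ae hllr]

end KullbackLeibler

section ProdWithDensity

variable {α β : Type*} [MeasurableSpace α] [MeasurableSpace β] {ν : Measure α} {m : Measure β}
  [SFinite ν] [SFinite m] {D : α × β → ℝ≥0∞}

lemma map_snd_prod_withDensity (hD : Measurable D) :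
    ((ν.prod m).withDensity D).map Prod.snd = m.withDensity fun y => ∫⁻ x, D (x, y) ∂ν := by
  refine Measure.ext_of_lintegral _ fun φ hφ => ?_
  rw [lintegral_map hφ measurable_snd, lintegral_withDensity_eq_lintegral_mul _ hD
    (by fun_prop : Measurable fun p : α × β => φ p.2),
    lintegral_withDensity_eq_lintegral_mul _ hD.lintegral_prod_left' hφ,
    lintegral_prod_symm _ (by fun_prop)]
  refine lintegral_congr fun y => ?_
  exact lintegral_mul_const (φ y) (hD.comp measurable_prodMk_right)

lemma integrable_comp_snd_prod_withDensity_iff (hD : Measurable D)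
    (hfin : ∀ y, ∫⁻ x, D (x, y) ∂ν ≠ ∞) {g : β → ℝ} (hg : Measurable g) :
    Integrable (fun p => g p.2) ((ν.prod m).withDensity D)
      ↔ Integrable (fun y => g y * (∫⁻ x, D (x, y) ∂ν).toReal) m := by
  rw [← Function.comp_def g Prod.snd,
    ← integrable_map_measure hg.aestronglyMeasurable measurable_snd.aemeasurable,
    map_snd_prod_withDensity hD, integrable_withDensity_iff hD.lintegral_prod_left'
      (.of_forall fun y => (hfin y).lt_top)]

lemma integral_comp_snd_prod_withDensity (hD : Measurable D)
    (hfin : ∀ y, ∫⁻ x, D (x, y) ∂ν ≠ ∞) {g : β → ℝ} (hg : Measurable g) :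
    ∫ p, g p.2 ∂(ν.prod m).withDensity D = ∫ y, (∫⁻ x, D (x, y) ∂ν).toReal * g y ∂m := by
  rw [← integral_map measurable_snd.aemeasurable hg.aestronglyMeasurable,
    map_snd_prod_withDensity hD, integral_withDensity_eq_integral_toReal_smul
      hD.lintegral_prod_left' (.of_forall fun y => (hfin y).lt_top)]
  rfl

lemma ae_prod_eq_zero_of_lintegral_fst_eq_zero (hD : Measurable D) :
    ∀ᵐ p ∂ν.prod m, ∫⁻ x, D (x, p.2) ∂ν = 0 → D p = 0 := by
  have hmeas : MeasurableSet {p : α × β | ∫⁻ x, D (x, p.2) ∂ν = 0 → D p = 0} := by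
    measurability
  rw [Measure.ae_prod_iff_ae_ae hmeas, Measure.ae_ae_comm hmeas]
  refine Filter.Eventually.of_forall fun y => ?_
  by_cases hy : ∫⁻ x, D (x, y) ∂ν = 0
  · filter_upwards [(lintegral_eq_zero_iff (hD.comp measurable_prodMk_right)).mp hy] with x hx
    exact fun _ => hx
  · exact Filter.Eventually.of_forall fun _ h => absurd h hy

lemma prod_withDensity_eq_withDensity_marginal (hD : Measurable D)
    (hfin : ∀ y, ∫⁻ x, D (x, y) ∂ν ≠ ∞) :
    (ν.prod m).withDensity D = (ν.prod (m.withDensity fun y => ∫⁻ x, D (x, y) ∂ν)).withDensity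
      fun p => (∫⁻ x, D (x, p.2) ∂ν)⁻¹ * D p := by
  have hF : Measurable fun p : α × β => ∫⁻ x, D (x, p.2) ∂ν :=
    hD.lintegral_prod_left'.comp measurable_snd
  rw [prod_withDensity_right hD.lintegral_prod_left',
    ← withDensity_mul (g := fun p => (∫⁻ x, D (x, p.2) ∂ν)⁻¹ * D p) _ hF (by fun_prop)]
  refine withDensity_congr_ae ?_
  filter_upwards [ae_prod_eq_zero_of_lintegral_fst_eq_zero hD] with p hp
  by_cases h0 : ∫⁻ x, D (x, p.2) ∂ν = 0
  · simp [hp h0, h0]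
  · rw [Pi.mul_apply, ← mul_assoc, ENNReal.mul_inv_cancel h0 (hfin _), one_mul]

end ProdWithDensity

lemma klDiv_prod_withDensity_eq_integral {α β : Type*} [MeasurableSpace α] [MeasurableSpace β]
    {ν : Measure α} {m : Measure β} [SigmaFinite ν] [SigmaFinite m] {D : α × β → ℝ≥0∞}
    (hD : Measurable D) (hfin : ∀ y, ∫⁻ x, D (x, y) ∂ν ≠ ∞)
    (hint : Integrable (fun p => log ((∫⁻ x, D (x, p.2) ∂ν)⁻¹ * D p).toReal)
      ((ν.prod m).withDensity D)) :
    klDiv ((ν.prod m).withDensity D) (ν.prod (m.withDensity fun y => ∫⁻ x, D (x, y) ∂ν))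
      = ((∫ p, log ((∫⁻ x, D (x, p.2) ∂ν)⁻¹ * D p).toReal ∂(ν.prod m).withDensity D : ℝ)
        : EReal) := by
  have : SigmaFinite (m.withDensity fun y => ∫⁻ x, D (x, y) ∂ν) :=
    SigmaFinite.withDensity_of_ne_top' hfin
  have hJP := prod_withDensity_eq_withDensity_marginal (m := m) hD hfin
  rw [hJP] at hint ⊢
  exact klDiv_withDensity_of_integrable (by fun_prop) hint

lemma ProbabilityTheory.IndepFun.map_prodMk_add_eq_withDensity {Ω G : Type*}
    [MeasurableSpace Ω] {μ : Measure Ω} [IsFiniteMeasure μ] [MeasurableSpace G] [AddCommGroup G]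
    [MeasurableAdd₂ G] [MeasurableSub₂ G] {m : Measure G} [SFinite m] [m.IsAddLeftInvariant]
    {X Y : Ω → G} (hX : Measurable X) (hY : Measurable Y) (hXY : IndepFun X Y μ)
    {k : G → ℝ≥0∞} (hk : Measurable k) (hY_law : μ.map Y = m.withDensity k) :
    μ.map (fun ω => (X ω, X ω + Y ω)) = ((μ.map X).prod m).withDensity fun p => k (p.2 - p.1) := by
  have hshear : Measurable fun p : G × G => (p.1, p.1 + p.2) := by fun_prop
  have hpair : μ.map (fun ω => (X ω, Y ω)) = ((μ.map X).prod m).withDensity fun p => k p.2 := by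
    rw [(indepFun_iff_map_prod_eq_prod_map_map hX.aemeasurable hY.aemeasurable).mp hXY, hY_law,
      prod_withDensity_right hk]
  have hcomp : (fun ω => (X ω, X ω + Y ω)) = (fun p : G × G => (p.1, p.1 + p.2)) ∘
      fun ω => (X ω, Y ω) := rfl
  refine Measure.ext_of_lintegral _ fun φ hφ => ?_
  have hshear_lintegral := (measurePreserving_prod_add (μ.map X) m).lintegral_comp
    (f := fun p : G × G => k (p.2 - p.1) * φ p) (by fun_prop)
  rw [hcomp, ← Measure.map_map hshear (hX.prodMk hY), hpair, lintegral_map hφ hshear,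
    lintegral_withDensity_eq_lintegral_mul _ (by fun_prop) (by fun_prop),
    lintegral_withDensity_eq_lintegral_mul _ (by fun_prop) hφ]
  simpa only [Pi.mul_apply, add_sub_cancel_left] using hshear_lintegral

lemma ProbabilityTheory.pdf.IsUniform.map_eq_withDensity {Ω E : Type*} [MeasurableSpace Ω]
    [MeasurableSpace E] {μ : Measure Ω} {m : Measure E} {X : Ω → E} {s : Set E}
    (hu : pdf.IsUniform X s μ m) (hs : MeasurableSet s) :
    μ.map X = m.withDensity (s.indicator fun _ => (m s)⁻¹) := by
  rw [hu, withDensity_indicator hs, withDensity_const, ProbabilityTheory.cond]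

section MeasureClosedBall

variable (ν : Measure ℝ) (γ : ℝ)

lemma lintegral_indicator_Icc_const_sub (a : ℝ≥0∞) (w : ℝ) :
    ∫⁻ x, (Icc (-γ) γ).indicator (fun _ => a) (w - x) ∂ν = a * ν (closedBall w γ) := by
  have h : (fun x => (Icc (-γ) γ).indicator (fun _ => a) (w - x))
      = (closedBall w γ).indicator fun _ => a := by
    ext x
    rw [← indicator_comp_right (fun x => w - x), preimage_const_sub_Icc, sub_neg_eq_add,
      ← Real.closedBall_eq_Icc]
    rfl
  rw [h, lintegral_indicator_const measurableSet_closedBall]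

lemma measurableSet_dist_le : MeasurableSet {p : ℝ × ℝ | dist p.2 p.1 ≤ γ} :=
  measurableSet_le (measurable_snd.dist measurable_fst) measurable_const

lemma measurable_measure_closedBall [SFinite ν] : Measurable fun w => ν (closedBall w γ) :=
  measurable_measure_prodMk_left (measurableSet_dist_le γ)

lemma lintegral_measure_closedBall [SFinite ν] :
    ∫⁻ w, ν (closedBall w γ) = ENNReal.ofReal (2 * γ) * ν univ := by
  have hslice : ∀ x, (fun w => (w, x)) ⁻¹' {p : ℝ × ℝ | dist p.2 p.1 ≤ γ} = closedBall x γ := by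
    intro x; ext w
    simp only [mem_preimage, mem_ofPred_eq, mem_closedBall, dist_comm]
  have hfubini := (Measure.prod_apply (μ := volume) (ν := ν) (measurableSet_dist_le γ)).symm.trans
    (Measure.prod_apply_symm (measurableSet_dist_le γ))
  simp only [hslice, volume_closedBall] at hfubini
  rw [← lintegral_const, ← hfubini]
  rfl

lemma integrable_measureReal_closedBall [IsFiniteMeasure ν] :
    Integrable fun w => ν.real (closedBall w γ) :=
  integrable_toReal_of_lintegral_ne_top (measurable_measure_closedBall ν γ).aemeasurable
    (by rw [lintegral_measure_closedBall]; finiteness)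

lemma integral_measureReal_closedBall [IsFiniteMeasure ν] (hγ : 0 ≤ γ) :
    ∫ w, ν.real (closedBall w γ) = 2 * γ * ν.real univ := by
  simp only [measureReal_def]
  rw [integral_toReal (measurable_measure_closedBall ν γ).aemeasurable
    (.of_forall fun w => measure_lt_top ν _), lintegral_measure_closedBall, ENNReal.toReal_mul,
    ENNReal.toReal_ofReal (by positivity)]

variable {ν γ} {β : ℝ}

lemma measure_closedBall_eq_one [IsProbabilityMeasure ν] (hν : ∀ᵐ x ∂ν, |x| ≤ β) {w : ℝ}
    (hw : |w| ≤ γ - β) : ν (closedBall w γ) = 1 := by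
  rw [← measure_univ (μ := ν)]
  refine (ae_iff_measure_eq measurableSet_closedBall.nullMeasurableSet).mp ?_
  filter_upwards [hν] with x hx
  rw [dist_eq]
  linarith [abs_sub x w]

lemma measure_closedBall_eq_zero (hν : ∀ᵐ x ∂ν, |x| ≤ β) {w : ℝ} (hw : γ + β < |w|) :
    ν (closedBall w γ) = 0 := by
  rw [measure_eq_zero_iff_ae_notMem]
  filter_upwards [hν] with x hx hxw
  rw [mem_closedBall, dist_eq] at hxw
  linarith [abs_sub_abs_le_abs_sub w x, abs_sub_comm x w]

end MeasureClosedBall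

lemma map_prodMk_add_eq_withDensity_of_isUniform {Ω : Type*} [MeasurableSpace Ω]
    {μ : Measure Ω} [IsFiniteMeasure μ] {X Y : Ω → ℝ} (hX : Measurable X) (hY : Measurable Y)
    (hXY : IndepFun X Y μ) {γ : ℝ} (hγ : 0 < γ) (hYunif : pdf.IsUniform Y (Icc (-γ) γ) μ) :
    μ.map (fun ω => (X ω, X ω + Y ω)) = ((μ.map X).prod volume).withDensity
      fun p => (Icc (-γ) γ).indicator (fun _ => ENNReal.ofReal (2 * γ)⁻¹) (p.2 - p.1) := by
  refine hXY.map_prodMk_add_eq_withDensity hX hY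
    (measurable_const.indicator measurableSet_Icc) ?_
  rw [pdf.IsUniform.map_eq_withDensity hYunif measurableSet_Icc, Real.volume_Icc,
    sub_neg_eq_add, ← two_mul, ← ENNReal.ofReal_inv_of_pos (by positivity)]

theorem mutualInfo_add_uniform_eq {Ω : Type*} [MeasurableSpace Ω] {μ : Measure Ω}
    [IsProbabilityMeasure μ] {X Y : Ω → ℝ} (hX : Measurable X) (hY : Measurable Y)
    (hXY : IndepFun X Y μ) {γ : ℝ} (hγ : 0 < γ) (hYunif : pdf.IsUniform Y (Icc (-γ) γ) μ)
    (hint : Integrable fun w => negMulLog ((μ.map X).real (closedBall w γ))) :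
    mutualInfo μ X (fun ω => X ω + Y ω)
      = (((2 * γ)⁻¹ * ∫ w, negMulLog ((μ.map X).real (closedBall w γ)) : ℝ) : EReal) := by
  set ν := μ.map X
  set G : ℝ → ℝ := fun w => ν.real (closedBall w γ)
  set a : ℝ≥0∞ := ENNReal.ofReal (2 * γ)⁻¹
  set D : ℝ × ℝ → ℝ≥0∞ := fun p => (Icc (-γ) γ).indicator (fun _ => a) (p.2 - p.1)
  have hD : Measurable D := (measurable_const.indicator measurableSet_Icc).comp (by fun_prop)
  have hF : ∀ w, ∫⁻ x, D (x, w) ∂ν = a * ν (closedBall w γ) :=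
    lintegral_indicator_Icc_const_sub ν γ a
  have hJ : μ.map (fun ω => (X ω, X ω + Y ω)) = (ν.prod volume).withDensity D :=
    map_prodMk_add_eq_withDensity_of_isUniform hX hY hXY hγ hYunif
  have hW : μ.map (fun ω => X ω + Y ω) = volume.withDensity fun w => ∫⁻ x, D (x, w) ∂ν := by
    rw [← map_snd_prod_withDensity hD, ← hJ, Measure.map_map measurable_snd (by fun_prop)]
    rfl
  have hfin : ∀ w, ∫⁻ x, D (x, w) ∂ν ≠ ∞ := fun w => by
    rw [hF]; exact ENNReal.mul_ne_top ENNReal.ofReal_ne_top (measure_ne_top _ _)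
  have hdensity : ∀ w, (∫⁻ x, D (x, w) ∂ν).toReal = (2 * γ)⁻¹ * G w := fun w => by
    rw [hF, ENNReal.toReal_mul, ENNReal.toReal_ofReal (by positivity)]
    rfl
  -- no case split on `G p.2 = 0`: both sides are then `0`, as `0⁻¹ = 0` and `log 0 = 0`
  have hllr : (fun p => log ((∫⁻ x, D (x, p.2) ∂ν)⁻¹ * D p).toReal)
      =ᵐ[(ν.prod volume).withDensity D] fun p => -log (G p.2) := by
    rw [Filter.EventuallyEq, ae_withDensity_iff hD]
    refine .of_forall fun p hp => ?_
    have hDp : D p = a := by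
      by_contra h
      exact hp (indicator_of_notMem (fun hm => h (indicator_of_mem hm _)) _)
    rw [ENNReal.toReal_mul, ENNReal.toReal_inv, hdensity, hDp, ENNReal.toReal_ofReal (by positivity),
      mul_inv, inv_inv, mul_right_comm, mul_inv_cancel₀ (by positivity), one_mul, log_inv]
  have hlogG : Measurable fun w => -log (G w) :=
    (measurable_measure_closedBall ν γ).ennreal_toReal.log.neg
  have hweight : ∀ w, -log (G w) * (∫⁻ x, D (x, w) ∂ν).toReal = (2 * γ)⁻¹ * negMulLog (G w) :=
    fun w => by rw [hdensity, negMulLog]; ring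
  have hI : Integrable (fun p => -log (G p.2)) ((ν.prod volume).withDensity D) := by
    rw [integrable_comp_snd_prod_withDensity_iff hD hfin hlogG]
    simpa only [hweight] using hint.const_mul (2 * γ)⁻¹
  rw [mutualInfo, hW, hJ, klDiv_prod_withDensity_eq_integral hD hfin (hI.congr hllr.symm),
    integral_congr_ae hllr, integral_comp_snd_prod_withDensity hD hfin hlogG,
    ← integral_const_mul]
  simp only [mul_comm _ (-log _), hweight]
  rfl

lemma negMulLog_le_half_add {x : ℝ} (hx : 0 ≤ x) : negMulLog x ≤ 1 / 2 + (log 2 - 1) * x := by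
  -- the tangent line at `1` (`negMulLog_le_one_sub_self`), rescaled to the tangent line at `1/2`
  have htangent := negMulLog_le_one_sub_self (mul_nonneg zero_le_two hx)
  have hhalf : negMulLog (1 / 2 : ℝ) = log 2 / 2 := by
    rw [negMulLog, one_div, log_inv]; ring
  have hscale := negMulLog_mul (2 * x) (1 / 2)
  rw [show 2 * x * (1 / 2) = x by ring, hhalf] at hscale
  linarith

/-- A majorant of `negMulLog ∘ G`: its tangent line at `G = 1/2`, shifted on `|w| ≤ γ - β` and on
`|w| > γ + β` so as to vanish where `G = 1`, resp. `G = 0`. -/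
noncomputable def windowBound (β γ : ℝ) (G : ℝ → ℝ) (w : ℝ) : ℝ :=
  (log 2 - 1) * G w + (Icc (-(γ + β)) (γ + β)).indicator (fun _ => 1 / 2) w
    - (Icc (-(γ - β)) (γ - β)).indicator (fun _ => log 2 - 1 / 2) w

lemma integrable_indicator_Icc_const (a b c : ℝ) : Integrable ((Icc a b).indicator fun _ => c) :=
  (integrableOn_const measure_Icc_lt_top.ne).integrable_indicator measurableSet_Icc

section WindowBound

variable {G : ℝ → ℝ} {β γ : ℝ}

lemma negMulLog_le_windowBound (hβ : 0 ≤ β) (hG0 : ∀ w, 0 ≤ G w)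
    (hin : ∀ w, |w| ≤ γ - β → G w = 1) (hout : ∀ w, γ + β < |w| → G w = 0) (w : ℝ) :
    negMulLog (G w) ≤ windowBound β γ G w := by
  rw [windowBound]
  by_cases hw_in : |w| ≤ γ - β
  · have hw_out : |w| ≤ γ + β := by linarith
    rw [hin w hw_in, indicator_of_mem (mem_Icc.2 (abs_le.1 hw_out)),
      indicator_of_mem (mem_Icc.2 (abs_le.1 hw_in)), negMulLog_one]
    linarith
  · rw [indicator_of_notMem (fun h => hw_in (abs_le.2 (mem_Icc.1 h)))]
    by_cases hw_out : |w| ≤ γ + β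
    · rw [indicator_of_mem (mem_Icc.2 (abs_le.1 hw_out))]
      linarith [negMulLog_le_half_add (hG0 w)]
    · rw [hout w (not_le.1 hw_out), indicator_of_notMem (fun h => hw_out (abs_le.2 (mem_Icc.1 h)))]
      simp

lemma integrable_windowBound (hG_int : Integrable G) : Integrable (windowBound β γ G) :=
  ((hG_int.const_mul _).add (integrable_indicator_Icc_const _ _ _)).sub
    (integrable_indicator_Icc_const _ _ _)

lemma integral_windowBound (hβ : 0 ≤ β) (hβγ : β ≤ γ) (hG_int : Integrable G)
    (hmass : ∫ w, G w = 2 * γ) : ∫ w, windowBound β γ G w = 2 * β * log 2 := by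
  have hind_outer := integrable_indicator_Icc_const (-(γ + β)) (γ + β) (1 / 2)
  have hind_inner := integrable_indicator_Icc_const (-(γ - β)) (γ - β) (log 2 - 1 / 2)
  simp only [windowBound]
  rw [integral_sub, integral_add, integral_const_mul, hmass,
    integral_indicator_const _ measurableSet_Icc, integral_indicator_const _ measurableSet_Icc,
    volume_real_Icc_of_le (by linarith), volume_real_Icc_of_le (by linarith)]
  · simp only [smul_eq_mul]
    ring
  · exact hG_int.const_mul _
  · exact hind_outer
  · exact (hG_int.const_mul _).add hind_outer
  · exact hind_inner

lemma integrable_negMulLog_comp (hβ : 0 ≤ β) (hG_int : Integrable G) (hG0 : ∀ w, 0 ≤ G w)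
    (hG1 : ∀ w, G w ≤ 1) (hin : ∀ w, |w| ≤ γ - β → G w = 1)
    (hout : ∀ w, γ + β < |w| → G w = 0) : Integrable fun w => negMulLog (G w) :=
  (integrable_windowBound hG_int).mono'
    (continuous_negMulLog.comp_aestronglyMeasurable hG_int.aestronglyMeasurable)
    (.of_forall fun w => by
      rw [norm_of_nonneg (negMulLog_nonneg (hG0 w) (hG1 w))]
      exact negMulLog_le_windowBound hβ hG0 hin hout w)

lemma integral_negMulLog_comp_le (hβ : 0 ≤ β) (hβγ : β ≤ γ) (hG_int : Integrable G)
    (hG0 : ∀ w, 0 ≤ G w) (hG1 : ∀ w, G w ≤ 1) (hin : ∀ w, |w| ≤ γ - β → G w = 1)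
    (hout : ∀ w, γ + β < |w| → G w = 0) (hmass : ∫ w, G w = 2 * γ) :
    ∫ w, negMulLog (G w) ≤ 2 * β * log 2 :=
  integral_windowBound hβ hβγ hG_int hmass ▸
    integral_mono (integrable_negMulLog_comp hβ hG_int hG0 hG1 hin hout)
      (integrable_windowBound hG_int) (negMulLog_le_windowBound hβ hG0 hin hout)

end WindowBound

theorem information_leak_bound {Ω : Type*} [MeasurableSpace Ω]
    (μ : Measure Ω) [IsProbabilityMeasure μ]
    (X Y : Ω → ℝ) (hX : Measurable X) (hY : Measurable Y)
    (hindep : IndepFun X Y μ)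
    (β γ : ℝ) (hβ : 0 < β) (hβγ : β < γ)
    (hXbd : ∀ᵐ ω ∂μ, |X ω| ≤ β)
    (hYunif : pdf.IsUniform Y (Set.Icc (-γ) γ) μ volume) :
    mutualInfo μ X (fun ω => X ω + Y ω) ≤ ((β / γ * Real.log 2 : ℝ) : EReal) := by
  have hγ : 0 < γ := hβ.trans hβγ
  have := Measure.isProbabilityMeasure_map (μ := μ) hX.aemeasurable
  have hν : ∀ᵐ x ∂μ.map X, |x| ≤ β :=
    (ae_map_iff hX.aemeasurable (measurableSet_le measurable_abs measurable_const)).2 hXbd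
  set G : ℝ → ℝ := fun w => (μ.map X).real (closedBall w γ)
  have hG0 : ∀ w, 0 ≤ G w := fun w => measureReal_nonneg
  have hG1 : ∀ w, G w ≤ 1 := fun w => measureReal_le_one
  have hin : ∀ w, |w| ≤ γ - β → G w = 1 := fun w hw => by
    simp only [G, measureReal_def, measure_closedBall_eq_one hν hw, ENNReal.toReal_one]
  have hout : ∀ w, γ + β < |w| → G w = 0 := fun w hw => by
    simp only [G, measureReal_def, measure_closedBall_eq_zero hν hw, ENNReal.toReal_zero]
  have hmass : ∫ w, G w = 2 * γ := by
    rw [integral_measureReal_closedBall _ _ hγ.le, probReal_univ, mul_one]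
  have hG_int := integrable_measureReal_closedBall (μ.map X) γ
  rw [mutualInfo_add_uniform_eq hX hY hindep hγ hYunif
    (integrable_negMulLog_comp hβ.le hG_int hG0 hG1 hin hout)]
  have hbound := integral_negMulLog_comp_le hβ.le hβγ.le hG_int hG0 hG1 hin hout hmass
  have hscaled : (2 * γ)⁻¹ * ∫ w, negMulLog (G w) ≤ β / γ * log 2 :=
    calc (2 * γ)⁻¹ * ∫ w, negMulLog (G w) ≤ (2 * γ)⁻¹ * (2 * β * log 2) :=
          mul_le_mul_of_nonneg_left hbound (by positivity)
      _ = β / γ * log 2 := by field_simp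
  exact_mod_cast hscaled
end

section
/- Let β and γ be real numbers with 0 < β < γ, let X be a random variable taking the value β with probability 1/2 and the value -β with probability 1/2 (β times a Rademacher variate), and let Y be independent of X and uniformly distributed on [-γ, γ]. Then the mutual information satisfies I(X; X+Y) = (β/γ)·ln 2 (that is, exactly β/γ bits). -/
open MeasureTheory ProbabilityTheory
open scoped Classical

/-!
Write `U c` for the uniform law on `[c - γ, c + γ]`. Since `X` is uniform on `{β, -β}` and
independent of `Y`, the pair `(X, X + Y)` has law `½ (δ_β ⊗ U β + δ_{-β} ⊗ U (-β))`, while `X + Y`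
has law `M = ½ (U β + U (-β))`; hence `I(X; X + Y) = ½ (KL(U β ‖ M) + KL(U (-β) ‖ M))`, the
Jensen–Shannon divergence of `U β` and `U (-β)`. The density of `U β` with respect to `M` is `2`
on the part of its support not covered by `U (-β)`, an interval of length `2β`, and `1` on the
overlap, so each divergence equals `(2β / 2γ) · log 2`.
-/

open Set MeasureTheory ProbabilityTheory
open scoped ENNReal

section Generalities

variable {α β : Type*} [MeasurableSpace α] [MeasurableSpace β]

theorem klDiv_withDensity_eq_integral_log {ν : Measure α} [SigmaFinite ν] {f : α → ℝ≥0∞}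
    (hf : Measurable f) (hint : Integrable (fun x => Real.log (f x).toReal) (ν.withDensity f)) :
    klDiv (ν.withDensity f) ν = ((∫ x, Real.log (f x).toReal ∂ν.withDensity f : ℝ) : EReal) := by
  have hac : ν.withDensity f ≪ ν := withDensity_absolutelyContinuous ν f
  have hllr : llr (ν.withDensity f) ν =ᵐ[ν.withDensity f] fun x => Real.log (f x).toReal := by
    filter_upwards [hac.ae_le (Measure.rnDeriv_withDensity ν hf)] with x hx
    simp only [llr_def, hx]
  rw [klDiv, if_pos ⟨hac, hint.congr hllr.symm⟩, integral_congr_ae hllr]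

theorem withDensity_map_eq_map_withDensity_comp {g : α → β} (hg : Measurable g) (ν : Measure α)
    {f : β → ℝ≥0∞} (hf : Measurable f) :
    (ν.map g).withDensity f = (ν.withDensity (f ∘ g)).map g := by
  ext s hs
  rw [withDensity_apply _ hs, Measure.restrict_map hg hs, lintegral_map hf hg,
    Measure.map_apply hg hs, withDensity_apply _ (hg hs), Function.comp_def]

theorem MeasureTheory.MeasurePreserving.map_cond_preimage {ν : Measure α} {ν' : Measure β}
    {f : α → β} (hf : MeasurePreserving f ν ν') {s : Set β} (hs : MeasurableSet s) :
    (ν[|f ⁻¹' s]).map f = ν'[|s] := by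
  rw [ProbabilityTheory.cond, ProbabilityTheory.cond, Measure.map_smul,
    (hf.restrict_preimage hs).map_eq, hf.measure_preimage hs.nullMeasurableSet]

end Generalities

section Overlap

variable {α : Type*} {A B : Set α}

noncomputable def overlapDensity (A B : Set α) : α → ℝ≥0∞ :=
  A.indicator fun z => if z ∈ B then 1 else 2

theorem log_overlapDensity :
    (fun z => Real.log (overlapDensity A B z).toReal) = (A \ B).indicator fun _ => Real.log 2 := by
  ext z
  by_cases hzA : z ∈ A <;> by_cases hzB : z ∈ B <;> simp [overlapDensity, hzA, hzB]

theorem indicator_overlapDensity_add_indicator_overlapDensity :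
    A.indicator (overlapDensity A B) + B.indicator (overlapDensity A B)
      = (2 : ℝ≥0∞) • A.indicator 1 := by
  ext z
  by_cases hzA : z ∈ A <;> by_cases hzB : z ∈ B <;> norm_num [overlapDensity, hzA, hzB]

variable [MeasurableSpace α] {ν : Measure α}

theorem measurable_overlapDensity (hA : MeasurableSet A) (hB : MeasurableSet B) :
    Measurable (overlapDensity A B) :=
  (Measurable.ite hB measurable_const measurable_const).indicator hA

theorem withDensity_overlapDensity (hA : MeasurableSet A) (hB : MeasurableSet B)
    (hAB : ν A = ν B) :
    ((2 : ℝ≥0∞)⁻¹ • (ν[|A] + ν[|B])).withDensity (overlapDensity A B) = ν[|A] := by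
  have hφ := measurable_overlapDensity hA hB
  rw [ProbabilityTheory.cond, ProbabilityTheory.cond, ← hAB, ← smul_add,
    withDensity_smul_measure, withDensity_smul_measure, withDensity_add_measure,
    ← withDensity_indicator hA, ← withDensity_indicator hB,
    ← withDensity_add_right _ (hφ.indicator hB),
    indicator_overlapDensity_add_indicator_overlapDensity,
    withDensity_smul _ (measurable_one.indicator hA), withDensity_indicator_one hA, smul_smul,
    smul_smul, mul_right_comm, ENNReal.inv_mul_cancel two_ne_zero ENNReal.ofNat_ne_top, one_mul]

theorem integrable_log_overlapDensity (hA : MeasurableSet A) (hB : MeasurableSet B) :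
    Integrable (fun z => Real.log (overlapDensity A B z).toReal) ν[|A] := by
  rw [log_overlapDensity]
  exact (integrable_const _).indicator (hA.diff hB)

theorem integral_log_overlapDensity (hA : MeasurableSet A) (hB : MeasurableSet B) :
    ∫ z, Real.log (overlapDensity A B z).toReal ∂ν[|A]
      = Real.log 2 * (ν (A \ B)).toReal / (ν A).toReal := by
  rw [log_overlapDensity, integral_indicator (hA.diff hB), setIntegral_const, measureReal_def,
    cond_apply hA, inter_eq_right.mpr sdiff_subset, ENNReal.toReal_mul, ENNReal.toReal_inv,
    smul_eq_mul]
  ring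

end Overlap

section BinaryMixture

variable {α E : Type*} [MeasurableSpace α] [MeasurableSpace E]
  {a b : α} {M P Q : Measure E} {φ ψ : E → ℝ≥0∞}

/-- The joint law of `(X, W)` when `X` is uniform on `{a, b}` and `W` has law `P` given `X = a`
and `Q` given `X = b`. -/
noncomputable def binaryMixture (a b : α) (P Q : Measure E) : Measure (α × E) :=
  (2 : ℝ≥0∞)⁻¹ • (P.map (Prod.mk a) + Q.map (Prod.mk b))

variable [MeasurableSingletonClass α]

theorem measurable_ite_fst_eq (a : α) (hφ : Measurable φ) (hψ : Measurable ψ) :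
    Measurable fun p : α × E => if p.1 = a then φ p.2 else ψ p.2 :=
  Measurable.ite (measurable_fst (measurableSet_singleton a)) (hφ.comp measurable_snd)
    (hψ.comp measurable_snd)

theorem binaryMixture_withDensity (hab : a ≠ b) [SFinite M] (hφ : Measurable φ)
    (hψ : Measurable ψ) :
    binaryMixture a b (M.withDensity φ) (M.withDensity ψ)
      = (((2 : ℝ≥0∞)⁻¹ • (Measure.dirac a + Measure.dirac b)).prod M).withDensity
          fun p => if p.1 = a then φ p.2 else ψ p.2 := by
  rw [binaryMixture, Measure.prod_smul_left, Measure.add_prod, Measure.dirac_prod,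
    Measure.dirac_prod, withDensity_smul_measure, withDensity_add_measure,
    withDensity_map_eq_map_withDensity_comp measurable_prodMk_left _
      (measurable_ite_fst_eq a hφ hψ),
    withDensity_map_eq_map_withDensity_comp measurable_prodMk_left _
      (measurable_ite_fst_eq a hφ hψ)]
  congr 4
  · ext z; simp
  · ext z; simp [hab.symm]

theorem klDiv_binaryMixture (hab : a ≠ b) [SigmaFinite M] (hφ : Measurable φ)
    (hψ : Measurable ψ) (hP : M.withDensity φ = P) (hQ : M.withDensity ψ = Q)
    (hintP : Integrable (fun z => Real.log (φ z).toReal) P)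
    (hintQ : Integrable (fun z => Real.log (ψ z).toReal) Q) :
    klDiv (binaryMixture a b P Q) (((2 : ℝ≥0∞)⁻¹ • (Measure.dirac a + Measure.dirac b)).prod M)
      = ((2⁻¹ * (∫ z, Real.log (φ z).toReal ∂P + ∫ z, Real.log (ψ z).toReal ∂Q) : ℝ) :
          EReal) := by
  set f : α × E → ℝ≥0∞ := fun p => if p.1 = a then φ p.2 else ψ p.2
  have hg : Measurable fun p => Real.log (f p).toReal :=
    Real.measurable_log.comp (measurable_ite_fst_eq a hφ hψ).ennreal_toReal
  have hfa (z : E) : f (a, z) = φ z := if_pos rfl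
  have hfb (z : E) : f (b, z) = ψ z := if_neg hab.symm
  have hintA : Integrable (fun p => Real.log (f p).toReal) (P.map (Prod.mk a)) := by
    rw [integrable_map_measure hg.aestronglyMeasurable measurable_prodMk_left.aemeasurable]
    simpa only [Function.comp_def, hfa] using hintP
  have hintB : Integrable (fun p => Real.log (f p).toReal) (Q.map (Prod.mk b)) := by
    rw [integrable_map_measure hg.aestronglyMeasurable measurable_prodMk_left.aemeasurable]
    simpa only [Function.comp_def, hfb] using hintQ
  have : IsFiniteMeasure ((2 : ℝ≥0∞)⁻¹ • (Measure.dirac a + Measure.dirac b)) :=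
    Measure.smul_finite _ (by simp)
  have hmix := binaryMixture_withDensity (M := M) hab hφ hψ
  rw [hP, hQ] at hmix
  rw [hmix, klDiv_withDensity_eq_integral_log (measurable_ite_fst_eq a hφ hψ)
    (hmix ▸ (hintA.add_measure hintB).smul_measure (by simp)), ← hmix, binaryMixture,
    integral_smul_measure, integral_add_measure hintA hintB,
    integral_map measurable_prodMk_left.aemeasurable hg.aestronglyMeasurable,
    integral_map measurable_prodMk_left.aemeasurable hg.aestronglyMeasurable]
  simp only [hfa, hfb, ENNReal.toReal_inv, ENNReal.toReal_ofNat, smul_eq_mul]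

end BinaryMixture

section AdditiveNoise

variable {Ω G : Type*} [MeasurableSpace Ω] [MeasurableSpace G] [Add G] [MeasurableAdd₂ G]
  {μ : Measure Ω} {X Y : Ω → G}

theorem ProbabilityTheory.IndepFun.map_prodMk_add [IsFiniteMeasure μ] (hX : Measurable X)
    (hY : Measurable Y) (h : IndepFun X Y μ) :
    μ.map (fun ω => (X ω, X ω + Y ω))
      = ((μ.map X).prod (μ.map Y)).map fun p => (p.1, p.1 + p.2) := by
  rw [← (indepFun_iff_map_prod_eq_prod_map_map hX.aemeasurable hY.aemeasurable).mp h,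
    Measure.map_map (by fun_prop) (hX.prodMk hY)]
  rfl

theorem MeasureTheory.Measure.dirac_prod_map_prodMk_add (a : G) (η : Measure G) [SFinite η] :
    ((Measure.dirac a).prod η).map (fun p => (p.1, p.1 + p.2))
      = (η.map (a + ·)).map (Prod.mk a) := by
  rw [Measure.dirac_prod, Measure.map_map (by fun_prop) measurable_prodMk_left,
    Measure.map_map measurable_prodMk_left (by fun_prop)]
  rfl

variable [IsFiniteMeasure μ] {a b : G}

theorem ProbabilityTheory.IndepFun.map_prodMk_add_of_map_eq_twoPoint (hX : Measurable X)
    (hY : Measurable Y) (h : IndepFun X Y μ)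
    (hXlaw : μ.map X = (2 : ℝ≥0∞)⁻¹ • (Measure.dirac a + Measure.dirac b)) :
    μ.map (fun ω => (X ω, X ω + Y ω))
      = binaryMixture a b ((μ.map Y).map (a + ·)) ((μ.map Y).map (b + ·)) := by
  rw [binaryMixture, h.map_prodMk_add hX hY, hXlaw, Measure.prod_smul_left, Measure.add_prod,
    Measure.map_smul, Measure.map_add _ _ (by fun_prop), Measure.dirac_prod_map_prodMk_add,
    Measure.dirac_prod_map_prodMk_add]

theorem ProbabilityTheory.IndepFun.map_add_of_map_eq_twoPoint (hX : Measurable X)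
    (hY : Measurable Y) (h : IndepFun X Y μ)
    (hXlaw : μ.map X = (2 : ℝ≥0∞)⁻¹ • (Measure.dirac a + Measure.dirac b)) :
    μ.map (fun ω => X ω + Y ω)
      = (2 : ℝ≥0∞)⁻¹ • ((μ.map Y).map (a + ·) + (μ.map Y).map (b + ·)) := by
  rw [← Measure.snd_map_prodMk hX, h.map_prodMk_add_of_map_eq_twoPoint hX hY hXlaw, binaryMixture,
    Measure.snd, Measure.map_smul, Measure.map_add _ _ measurable_snd,
    Measure.map_map measurable_snd measurable_prodMk_left,
    Measure.map_map measurable_snd measurable_prodMk_left, Prod.snd_comp_mk, Prod.snd_comp_mk,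
    Measure.map_id, Measure.map_id]

end AdditiveNoise

section Intervals

theorem map_const_add_cond_Icc (a l u : ℝ) :
    (volume[|Icc l u]).map (a + ·) = volume[|Icc (a + l) (a + u)] := by
  have := (measurePreserving_add_left volume a).map_cond_preimage
    (measurableSet_Icc (a := a + l) (b := a + u))
  rwa [preimage_const_add_Icc, add_sub_cancel_left, add_sub_cancel_left] at this

theorem volume_Icc_sub_add (c r : ℝ) : volume (Icc (c - r) (c + r)) = ENNReal.ofReal (2 * r) := by
  rw [Real.volume_Icc]
  ring_nf

theorem volume_Icc_sub_add_sdiff {a b r : ℝ} (h : |a - b| ≤ 2 * r) :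
    volume (Icc (a - r) (a + r) \ Icc (b - r) (b + r)) = ENNReal.ofReal |a - b| := by
  rcases le_total b a with hba | hab
  · have hdiff : Icc (a - r) (a + r) \ Icc (b - r) (b + r) = Ioc (b + r) (a + r) := by
      rw [abs_of_nonneg (sub_nonneg.mpr hba)] at h
      ext z
      simp only [mem_sdiff, mem_Icc, mem_Ioc, not_and_or, not_le]
      constructor
      · rintro ⟨⟨h1, h2⟩, h3 | h3⟩ <;> constructor <;> linarith
      · rintro ⟨h1, h2⟩
        exact ⟨⟨by linarith, h2⟩, Or.inr h1⟩
    rw [hdiff, Real.volume_Ioc, abs_of_nonneg (sub_nonneg.mpr hba)]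
    ring_nf
  · have hdiff : Icc (a - r) (a + r) \ Icc (b - r) (b + r) = Ico (a - r) (b - r) := by
      rw [abs_of_nonpos (sub_nonpos.mpr hab)] at h
      ext z
      simp only [mem_sdiff, mem_Icc, mem_Ico, not_and_or, not_le]
      constructor
      · rintro ⟨⟨h1, h2⟩, h3 | h3⟩ <;> constructor <;> linarith
      · rintro ⟨h1, h2⟩
        exact ⟨⟨h1, by linarith⟩, Or.inl h2⟩
    rw [hdiff, Real.volume_Ico, abs_of_nonpos (sub_nonpos.mpr hab)]
    ring_nf

theorem integral_log_overlapDensity_Icc {a b r : ℝ} (h : |a - b| ≤ 2 * r) :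
    ∫ z, Real.log (overlapDensity (Icc (a - r) (a + r)) (Icc (b - r) (b + r)) z).toReal
        ∂volume[|Icc (a - r) (a + r)] = Real.log 2 * |a - b| / (2 * r) := by
  rw [integral_log_overlapDensity measurableSet_Icc measurableSet_Icc,
    volume_Icc_sub_add_sdiff h, volume_Icc_sub_add, ENNReal.toReal_ofReal (abs_nonneg _),
    ENNReal.toReal_ofReal ((abs_nonneg _).trans h)]

end Intervals

theorem information_leak_rademacher {Ω : Type*} [MeasurableSpace Ω]
    (μ : Measure Ω) [IsProbabilityMeasure μ]
    (X Y : Ω → ℝ) (hX : Measurable X) (hY : Measurable Y)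
    (hindep : IndepFun X Y μ)
    (β γ : ℝ) (hβ : 0 < β) (hβγ : β < γ)
    (hXlaw : μ.map X = (2 : ENNReal)⁻¹ • (Measure.dirac β + Measure.dirac (-β)))
    (hYunif : pdf.IsUniform Y (Set.Icc (-γ) γ) μ volume) :
    mutualInfo μ X (fun ω => X ω + Y ω) = ((β / γ * Real.log 2 : ℝ) : EReal) := by
  have hshift (a : ℝ) : (μ.map Y).map (a + ·) = volume[|Icc (a - γ) (a + γ)] := by
    rw [hYunif, map_const_add_cond_Icc, ← sub_eq_add_neg]
  have hvol (a b : ℝ) : volume (Icc (a - γ) (a + γ)) = volume (Icc (b - γ) (b + γ)) := by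
    rw [volume_Icc_sub_add, volume_Icc_sub_add]
  have hdist : |β - -β| = 2 * β := by rw [sub_neg_eq_add, ← two_mul, abs_of_pos (by linarith)]
  have hdist' : |-β - β| = 2 * β := by rw [abs_sub_comm, hdist]
  rw [mutualInfo, hindep.map_prodMk_add_of_map_eq_twoPoint hX hY hXlaw,
    hindep.map_add_of_map_eq_twoPoint hX hY hXlaw, hXlaw, hshift, hshift]
  have : IsFiniteMeasure ((2 : ℝ≥0∞)⁻¹ •
      (volume[|Icc (β - γ) (β + γ)] + volume[|Icc (-β - γ) (-β + γ)])) :=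
    Measure.smul_finite _ (by simp)
  rw [klDiv_binaryMixture (by linarith : β ≠ -β)
      (measurable_overlapDensity measurableSet_Icc measurableSet_Icc)
      (measurable_overlapDensity measurableSet_Icc measurableSet_Icc)
      (withDensity_overlapDensity measurableSet_Icc measurableSet_Icc (hvol _ _))
      (by rw [add_comm]
          exact withDensity_overlapDensity measurableSet_Icc measurableSet_Icc (hvol _ _))
      (integrable_log_overlapDensity measurableSet_Icc measurableSet_Icc)
      (integrable_log_overlapDensity measurableSet_Icc measurableSet_Icc),
    integral_log_overlapDensity_Icc (by linarith), integral_log_overlapDensity_Icc (by linarith),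
    hdist, hdist']
  congr 1
  field_simp
  ring
end

section
/- Let β and γ be real numbers with 0 < β < γ, let μ be a Borel probability measure on ℝ with μ([-β, β]) = 1, let F be the cumulative distribution function of μ, and define g(y) = (F(y+γ) - F(y-γ))/(2γ) for y ∈ ℝ. Then -∫_ℝ g(y) log₂ g(y) dy ≤ β/γ + log₂(2γ). -/
/-!
Let `F` vanish below `a` and equal `1` from `b` on, with `b - a < 2γ`. The smoothed density is
`0` outside `[a - γ, b + γ]` and flat, equal to `1/(2γ)`, on `[b - γ, a + γ]`; on the two remaining
strips, translated by `∓γ` onto `[a, b]`, it equals `F u / (2γ)` and `(1 - F u) / (2γ)`. For each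
`u` the two values of `-x log x` add up to `(h(F u) + log 2γ) / (2γ)` with `h` the binary entropy,
and `h ≤ log 2`; integrating over `[a, b]` and adding the flat part gives
`(b - a) log 2 / (2γ) + log 2γ` nats.
-/

open MeasureTheory ProbabilityTheory Real Set

theorem Continuous.intervalIntegrable_comp_of_mapsTo_isCompact {φ f : ℝ → ℝ} (hφ : Continuous φ)
    (hf : Measurable f) {K : Set ℝ} (hK : IsCompact K) (hfK : ∀ x, f x ∈ K) (a b : ℝ) :
    IntervalIntegrable (fun x => φ (f x)) volume a b := by
  obtain ⟨C, hC⟩ := hK.exists_bound_of_continuousOn hφ.continuousOn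
  rw [intervalIntegrable_iff]
  exact Measure.integrableOn_of_bounded measure_Ioc_lt_top.ne
    (hφ.measurable.comp hf).aestronglyMeasurable (ae_of_all _ fun x => hC _ (hfK x))

theorem negMulLog_div_add_negMulLog_one_sub_div (p c : ℝ) :
    negMulLog (p / c) + negMulLog ((1 - p) / c) = (binEntropy p + log c) / c := by
  have hinv : negMulLog c⁻¹ = c⁻¹ * log c := by simp [negMulLog, log_inv]
  rw [div_eq_mul_inv, div_eq_mul_inv, negMulLog_mul, negMulLog_mul, hinv,
    binEntropy_eq_negMulLog_add_negMulLog_one_sub]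
  ring

theorem neg_integral_mul_logb {α : Type*} [MeasurableSpace α] (ν : Measure α) (f : α → ℝ) (b : ℝ) :
    -∫ x, f x * logb b (f x) ∂ν = (∫ x, negMulLog (f x) ∂ν) / log b := by
  simp only [logb, negMulLog, ← integral_neg, ← integral_div]
  congr 1 with x
  ring

section Support

variable {μ : Measure ℝ} [IsProbabilityMeasure μ] {a b x : ℝ}

theorem cdf_eq_zero_of_lt (hμ : μ (Icc a b) = 1) (hx : x < a) : cdf μ x = 0 := by
  have hnull : μ (Icc a b)ᶜ = 0 := prob_compl_eq_zero_iff measurableSet_Icc |>.mpr hμ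
  rw [cdf_eq_real, measureReal_def, measure_mono_null (fun t ht => ?_) hnull, ENNReal.toReal_zero]
  exact fun h => (lt_irrefl a) ((h.1.trans ht).trans_lt hx)

theorem cdf_eq_one_of_le (hμ : μ (Icc a b) = 1) (hx : b ≤ x) : cdf μ x = 1 := by
  rw [cdf_eq_real, measureReal_def, le_antisymm prob_le_one (hμ ▸ measure_mono
    (fun t ht => (ht.2.trans hx : t ≤ x))), ENNReal.toReal_one]

end Support

/-- The density of `X + U` for independent `X` with distribution function `F` and `U` uniform on
`[-γ, γ]`. -/
noncomputable def smoothedDensity (F : ℝ → ℝ) (γ y : ℝ) : ℝ := (F (y + γ) - F (y - γ)) / (2 * γ)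

section SmoothedDensity

variable {F : ℝ → ℝ} {a b γ : ℝ}

theorem mem_Icc_zero_one_of_monotone (hF : Monotone F) (hFa : ∀ x < a, F x = 0)
    (hFb : ∀ x, b ≤ x → F x = 1) (x : ℝ) : F x ∈ Icc 0 1 :=
  ⟨hFa (min x a - 1) (by linarith [min_le_right x a]) ▸ hF (by linarith [min_le_left x a]),
    hFb (max x b) (le_max_right x b) ▸ hF (le_max_left x b)⟩

theorem Monotone.measurable_smoothedDensity (hF : Monotone F) (γ : ℝ) :
    Measurable (smoothedDensity F γ) :=
  ((hF.measurable.comp (measurable_add_const γ)).sub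
    (hF.measurable.comp (measurable_sub_const γ))).div_const _

theorem smoothedDensity_mem_Icc (hF : Monotone F) (hF01 : ∀ x, F x ∈ Icc 0 1) (hγ : 0 < γ)
    (y : ℝ) : smoothedDensity F γ y ∈ Icc 0 (1 / (2 * γ)) := by
  have hmono := hF (show y - γ ≤ y + γ by linarith)
  have h₁ := hF01 (y + γ)
  have h₂ := hF01 (y - γ)
  refine ⟨div_nonneg (by linarith) (by linarith), ?_⟩
  unfold smoothedDensity
  gcongr
  linarith [h₁.2, h₂.1]

theorem smoothedDensity_eq_zero (hFa : ∀ x < a, F x = 0) (hFb : ∀ x, b ≤ x → F x = 1)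
    (hγ : 0 ≤ γ) {y : ℝ} (hy : y ∉ Icc (a - γ) (b + γ)) : smoothedDensity F γ y = 0 := by
  rw [mem_Icc, not_and_or, not_le, not_le] at hy
  unfold smoothedDensity
  rcases hy with hy | hy
  · rw [hFa _ (by linarith), hFa _ (by linarith), sub_zero, zero_div]
  · rw [hFb _ (by linarith), hFb _ (by linarith), sub_self, zero_div]

theorem smoothedDensity_eq_of_mem_Ioo (hFa : ∀ x < a, F x = 0) (hFb : ∀ x, b ≤ x → F x = 1)
    {y : ℝ} (hy : y ∈ Ioo (b - γ) (a + γ)) : smoothedDensity F γ y = 1 / (2 * γ) := by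
  rw [smoothedDensity, hFb _ (by linarith [hy.1]), hFa _ (by linarith [hy.2]), sub_zero]

theorem smoothedDensity_sub (hFa : ∀ x < a, F x = 0) (hba : b - a < 2 * γ) {u : ℝ} (hu : u ≤ b) :
    smoothedDensity F γ (u - γ) = F u / (2 * γ) := by
  rw [smoothedDensity, sub_add_cancel, hFa (u - γ - γ) (by linarith), sub_zero]

theorem smoothedDensity_add (hFb : ∀ x, b ≤ x → F x = 1) (hba : b - a < 2 * γ) {u : ℝ}
    (hu : a ≤ u) : smoothedDensity F γ (u + γ) = (1 - F u) / (2 * γ) := by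
  rw [smoothedDensity, add_sub_cancel_right, hFb _ (by linarith)]

theorem integral_comp_smoothedDensity (hF : Monotone F) (hFa : ∀ x < a, F x = 0)
    (hFb : ∀ x, b ≤ x → F x = 1) (hab : a ≤ b) (hba : b - a < 2 * γ) {φ : ℝ → ℝ}
    (hφ : Continuous φ) (hφ0 : φ 0 = 0) :
    ∫ y, φ (smoothedDensity F γ y) =
      (∫ u in a..b, φ (F u / (2 * γ)) + φ ((1 - F u) / (2 * γ))) +
        (2 * γ - (b - a)) * φ (1 / (2 * γ)) := by
  have hγ₀ : 0 < γ := by linarith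
  have hint : ∀ s t, IntervalIntegrable (fun y => φ (smoothedDensity F γ y)) volume s t :=
    hφ.intervalIntegrable_comp_of_mapsTo_isCompact (hF.measurable_smoothedDensity γ)
      isCompact_Icc (smoothedDensity_mem_Icc hF (mem_Icc_zero_one_of_monotone hF hFa hFb) hγ₀)
  have hsupp : ∫ y, φ (smoothedDensity F γ y) =
      ∫ y in (a - γ)..(b + γ), φ (smoothedDensity F γ y) := by
    rw [intervalIntegral.integral_of_le (by linarith), ← integral_Icc_eq_integral_Ioc]
    refine (setIntegral_eq_integral_of_forall_compl_eq_zero fun y hy => ?_).symm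
    rw [smoothedDensity_eq_zero hFa hFb hγ₀.le hy, hφ0]
  have hmiddle : ∫ y in (b - γ)..(a + γ), φ (smoothedDensity F γ y) =
      (2 * γ - (b - a)) * φ (1 / (2 * γ)) := by
    rw [intervalIntegral.integral_of_le (by linarith), integral_Ioc_eq_integral_Ioo,
      setIntegral_congr_fun measurableSet_Ioo fun y hy => by
        rw [smoothedDensity_eq_of_mem_Ioo hFa hFb hy],
      setIntegral_const, measureReal_def, Real.volume_Ioo, ENNReal.toReal_ofReal (by linarith),
      smul_eq_mul]
    ring_nf
  have hedges : (∫ y in (a - γ)..(b - γ), φ (smoothedDensity F γ y)) +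
      ∫ y in (a + γ)..(b + γ), φ (smoothedDensity F γ y) =
      ∫ u in a..b, φ (F u / (2 * γ)) + φ ((1 - F u) / (2 * γ)) := by
    rw [← intervalIntegral.integral_comp_sub_right (fun y => φ (smoothedDensity F γ y)) γ,
      ← intervalIntegral.integral_comp_add_right (fun y => φ (smoothedDensity F γ y)) γ,
      ← intervalIntegral.integral_add (by simpa using (hint (a - γ) (b - γ)).comp_sub_right γ)
        (by simpa using (hint (a + γ) (b + γ)).comp_add_right γ)]
    refine intervalIntegral.integral_congr fun u hu => ?_
    rw [uIcc_of_le hab] at hu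
    simp only [smoothedDensity_sub hFa hba hu.2, smoothedDensity_add hFb hba hu.1]
  rw [hsupp, ← intervalIntegral.integral_add_adjacent_intervals (hint _ (a + γ)) (hint _ _),
    ← intervalIntegral.integral_add_adjacent_intervals (hint _ (b - γ)) (hint _ _), hmiddle,
    ← hedges]
  ring

theorem integral_negMulLog_smoothedDensity_le (hF : Monotone F) (hFa : ∀ x < a, F x = 0)
    (hFb : ∀ x, b ≤ x → F x = 1) (hab : a ≤ b) (hba : b - a < 2 * γ) :
    ∫ y, negMulLog (smoothedDensity F γ y) ≤ (b - a) * log 2 / (2 * γ) + log (2 * γ) := by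
  have hγ₀ : 0 < γ := by linarith
  have hedges : ∫ u in a..b, negMulLog (F u / (2 * γ)) + negMulLog ((1 - F u) / (2 * γ)) ≤
      (b - a) * ((log 2 + log (2 * γ)) / (2 * γ)) := by
    have hint := (show Continuous fun p => negMulLog (p / (2 * γ)) + negMulLog ((1 - p) / (2 * γ))
      by fun_prop).intervalIntegrable_comp_of_mapsTo_isCompact hF.measurable isCompact_Icc
        (mem_Icc_zero_one_of_monotone hF hFa hFb) a b
    calc _ ≤ ∫ _ in a..b, (log 2 + log (2 * γ)) / (2 * γ) :=
          intervalIntegral.integral_mono_on hab hint intervalIntegrable_const fun u _ => by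
            rw [negMulLog_div_add_negMulLog_one_sub_div]
            gcongr
            exact binEntropy_le_log_two
      _ = _ := by rw [intervalIntegral.integral_const, smul_eq_mul]
  have hmiddle : negMulLog (1 / (2 * γ)) = log (2 * γ) / (2 * γ) := by
    rw [negMulLog, one_div, log_inv]
    ring
  rw [integral_comp_smoothedDensity hF hFa hFb hab hba continuous_negMulLog negMulLog_zero,
    hmiddle]
  calc _ ≤ (b - a) * ((log 2 + log (2 * γ)) / (2 * γ)) +
        (2 * γ - (b - a)) * (log (2 * γ) / (2 * γ)) := by gcongr
    _ = _ := by field_simp; ring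

end SmoothedDensity

theorem entropy_of_smoothed_cdf_le (β γ : ℝ) (hβ : 0 < β) (hβγ : β < γ)
    (μ : Measure ℝ) [IsProbabilityMeasure μ] (hμ : μ (Set.Icc (-β) β) = 1)
    (F : ℝ → ℝ) (hF : ∀ x, F x = (μ (Set.Iic x)).toReal)
    (g : ℝ → ℝ) (hg : ∀ y, g y = (F (y + γ) - F (y - γ)) / (2 * γ)) :
    -∫ y, g y * Real.logb 2 (g y) ≤ β / γ + Real.logb 2 (2 * γ) := by
  obtain rfl : F = cdf μ := funext fun x => (hF x).trans (cdf_eq_real μ x).symm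
  obtain rfl : g = smoothedDensity (cdf μ) γ := funext hg
  rw [neg_integral_mul_logb, div_le_iff₀ (log_pos one_lt_two)]
  calc _ ≤ (β - -β) * log 2 / (2 * γ) + log (2 * γ) :=
        integral_negMulLog_smoothedDensity_le (cdf μ).mono (fun _ => cdf_eq_zero_of_lt hμ)
          (fun _ => cdf_eq_one_of_le hμ) (by linarith) (by linarith)
    _ = (β / γ + logb 2 (2 * γ)) * log 2 := by
        rw [logb]
        field_simp
        ring
end

section
/- Let β and γ be real numbers with 0 < β < γ, let μ be the probability measure (δ_{-β} + δ_{β})/2 on ℝ (the law of β times a Rademacher variate), let F be its cumulative distribution function, and define g(y) = (F(y+γ) - F(y-γ))/(2γ). Then -∫_ℝ g(y) log₂ g(y) dy = β/γ + log₂(2γ). -/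
/-!
Each atom `a` of `μ = (δ_{-β} + δ_β)/2` contributes to `y ↦ (F (y + γ) - F (y - γ)) / 2γ` the
indicator of `[a - γ, a + γ)`, so `g = u / 4γ` with `u` the number of these two intervals
containing `y`. Since `u ∈ {0, 1, 2}`, `u log₂ u` is twice the indicator of their overlap
`[β - γ, γ - β)`, and the entropy reduces to the lengths `2γ, 2γ, 2(γ - β)`.
-/

open MeasureTheory Set Real

lemma toReal_half_smul_dirac_add_dirac_Iic (a b x : ℝ) :
    (((2 : ENNReal)⁻¹ • (Measure.dirac a + Measure.dirac b)) (Iic x)).toReal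
      = ((Ici a).indicator 1 x + (Ici b).indicator 1 x) / 2 := by
  simp only [Measure.smul_apply, Measure.add_apply, Measure.dirac_apply' _ measurableSet_Iic,
    indicator_apply, mem_Iic, mem_Ici, smul_eq_mul]
  split_ifs <;> norm_num

lemma indicator_Ici_add_sub_indicator_Ici_sub (a r x : ℝ) (hr : 0 ≤ r) :
    (Ici a).indicator (1 : ℝ → ℝ) (x + r) - (Ici a).indicator 1 (x - r)
      = (Ico (a - r) (a + r)).indicator 1 x := by
  simp only [indicator_apply, mem_Ici, mem_Ico, Pi.one_apply]
  split_ifs <;> grind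

lemma div_mul_logb_div (b u c : ℝ) (hc : c ≠ 0) :
    u / c * logb b (u / c) = (u * logb b u - u * logb b c) / c := by
  rcases eq_or_ne u 0 with rfl | hu
  · simp
  · rw [logb_div hu hc]
    ring

lemma indicator_add_indicator_mul_logb_two {α : Type*} (s t : Set α) (x : α) :
    (s.indicator 1 x + t.indicator 1 x) * logb 2 (s.indicator 1 x + t.indicator 1 x)
      = 2 * (s ∩ t).indicator (1 : α → ℝ) x := by
  by_cases hs : x ∈ s <;> by_cases ht : x ∈ t <;> simp [hs, ht, one_add_one_eq_two]

lemma integral_indicator_add_indicator_div_mul_logb {α : Type*} [MeasurableSpace α]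
    {μ : Measure α} {s t : Set α} (hs : MeasurableSet s) (ht : MeasurableSet t)
    (hμs : μ s ≠ ⊤) (hμt : μ t ≠ ⊤) {c : ℝ} (hc : c ≠ 0) :
    ∫ x, (s.indicator 1 x + t.indicator 1 x) / c
        * logb 2 ((s.indicator 1 x + t.indicator 1 x) / c) ∂μ
      = (2 * μ.real (s ∩ t) - logb 2 c * (μ.real s + μ.real t)) / c := by
  have hint : ∀ {v : Set α}, MeasurableSet v → μ v ≠ ⊤ → Integrable (v.indicator (1 : α → ℝ)) μ :=
    fun hv hμv => (integrable_indicator_iff hv).2 (integrableOn_const hμv)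
  have hS := hint hs hμs
  have hT := hint ht hμt
  have hST := hint (hs.inter ht) (measure_ne_top_of_subset inter_subset_left hμs)
  have hSaddT : Integrable (fun x => s.indicator 1 x + t.indicator (1 : α → ℝ) x) μ := hS.add hT
  simp only [div_mul_logb_div _ _ _ hc, indicator_add_indicator_mul_logb_two]
  rw [integral_div, integral_sub (hST.const_mul 2) (hSaddT.mul_const _), integral_const_mul,
    integral_mul_const, integral_add hS hT, integral_indicator_one (hs.inter ht),
    integral_indicator_one hs, integral_indicator_one ht]
  ring

theorem entropy_of_smoothed_cdf_rademacher (β γ : ℝ) (hβ : 0 < β) (hβγ : β < γ)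
    (μ : Measure ℝ)
    (hμ : μ = (2 : ENNReal)⁻¹ • (Measure.dirac (-β) + Measure.dirac β))
    (F : ℝ → ℝ) (hF : ∀ x, F x = (μ (Set.Iic x)).toReal)
    (g : ℝ → ℝ) (hg : ∀ y, g y = (F (y + γ) - F (y - γ)) / (2 * γ)) :
    -∫ y, g y * Real.logb 2 (g y) = β / γ + Real.logb 2 (2 * γ) := by
  have hγ : 0 < γ := hβ.trans hβγ
  have hg' : g = fun y => ((Ico (-β - γ) (-β + γ)).indicator 1 y
      + (Ico (β - γ) (β + γ)).indicator 1 y) / (4 * γ) := by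
    funext y
    rw [hg, hF, hF, hμ, toReal_half_smul_dirac_add_dirac_Iic,
      toReal_half_smul_dirac_add_dirac_Iic,
      ← indicator_Ici_add_sub_indicator_Ici_sub _ _ _ hγ.le,
      ← indicator_Ici_add_sub_indicator_Ici_sub _ _ _ hγ.le]
    field_simp
    ring
  have hoverlap : Ico (-β - γ) (-β + γ) ∩ Ico (β - γ) (β + γ) = Ico (β - γ) (γ - β) := by
    rw [Ico_inter_Ico, max_eq_right (by linarith), min_eq_left (by linarith)]
    ring_nf
  have hlog : logb 2 (4 * γ) = 1 + logb 2 (2 * γ) := by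
    rw [show 4 * γ = 2 * (2 * γ) by ring, logb_mul two_ne_zero (by positivity),
      logb_self_eq_one one_lt_two]
  rw [hg', integral_indicator_add_indicator_div_mul_logb measurableSet_Ico measurableSet_Ico
      measure_Ico_lt_top.ne measure_Ico_lt_top.ne (by positivity), hoverlap,
    Real.volume_real_Ico_of_le (by linarith), Real.volume_real_Ico_of_le (by linarith),
    Real.volume_real_Ico_of_le (by linarith), hlog]
  field_simp
  ring
end

section
/- Let β > 0 and ε ∈ (0, 1) be real numbers, let x be a real number with -β ≤ x ≤ 0, and let n be a positive integer with n ≥ log₂(2β²/ε). Then the scaling-and-squaring approximation satisfies |(1 + x/2ⁿ)^(2ⁿ) - exp(x)| ≤ ε·exp(x), i.e., n successive squarings of 1 + x/2ⁿ yield exp(x) to relative accuracy ε. -/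
theorem scaling_and_squaring_exp (β ε x : ℝ) (n : ℕ)
    (hβ : 0 < β) (hε0 : 0 < ε) (hε1 : ε < 1)
    (hxl : -β ≤ x) (hxu : x ≤ 0)
    (hn : 1 ≤ n) (hnlog : Real.logb 2 (2 * β ^ 2 / ε) ≤ (n : ℝ)) :
    |(1 + x / 2 ^ n) ^ 2 ^ n - Real.exp x| ≤ ε * Real.exp x := by
  set m : ℝ := 2 ^ n with hm_def
  have hm : (0:ℝ) < m := by positivity
  have h2n : 2 * β ^ 2 / ε ≤ m := by
    have := (Real.logb_le_iff_le_rpow (by norm_num) (by positivity)).mp hnlog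
    rwa [Real.rpow_natCast] at this
  have hβ2 : 2 * β ^ 2 ≤ ε * m := by
    rw [div_le_iff₀ hε0] at h2n; linarith
  have h2m : (2:ℝ) ≤ m := by
    calc (2:ℝ) = 2 ^ 1 := by norm_num
    _ ≤ m := by exact pow_le_pow_right₀ (by norm_num) hn
  have hβm : β ≤ m := by
    rcases le_or_gt β (1/2) with h | h
    · linarith
    · nlinarith
  set y : ℝ := x / m with hy_def
  have hy0 : y ≤ 0 := div_nonpos_of_nonpos_of_nonneg hxu hm.le
  have hy1 : -1 ≤ y := by
    rw [hy_def, le_div_iff₀ hm]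
    linarith
  have h1y : 0 ≤ 1 + y := by linarith
  have hMcast : ((2 ^ n : ℕ) : ℝ) = m := by push_cast [hm_def]; ring
  -- upper bound
  have hupper : (1 + y) ^ 2 ^ n ≤ Real.exp x := by
    calc (1 + y) ^ 2 ^ n ≤ (Real.exp y) ^ 2 ^ n :=
          pow_le_pow_left₀ h1y (by linarith [Real.add_one_le_exp y]) _
      _ = Real.exp (((2 ^ n : ℕ) : ℝ) * y) := (Real.exp_nat_mul y _).symm
      _ = Real.exp x := by rw [hMcast, hy_def, mul_div_cancel₀ _ hm.ne']
  -- key pointwise inequality : exp y * (1 - y^2) ≤ 1 + y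
  have hkey : Real.exp y * (1 - y ^ 2) ≤ 1 + y := by
    have h1 : 1 - y ≤ Real.exp (-y) := Real.add_one_le_exp (-y) |>.trans_eq' (by ring_nf)
    have h2 : (1 - y) * Real.exp y ≤ 1 := by
      have := mul_le_mul_of_nonneg_right h1 (Real.exp_pos y).le
      rwa [← Real.exp_add, neg_add_cancel, Real.exp_zero] at this
    nlinarith [Real.exp_pos y]
  have hy2 : y ^ 2 ≤ 1 := by nlinarith
  have hlpos : 0 ≤ Real.exp y * (1 - y ^ 2) := mul_nonneg (Real.exp_pos y).le (by nlinarith)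
  have hlower1 : Real.exp x * (1 - y ^ 2) ^ 2 ^ n ≤ (1 + y) ^ 2 ^ n := by
    calc Real.exp x * (1 - y ^ 2) ^ 2 ^ n
        = (Real.exp y) ^ 2 ^ n * (1 - y ^ 2) ^ 2 ^ n := by
          rw [← Real.exp_nat_mul, hMcast, hy_def, mul_div_cancel₀ _ hm.ne']
      _ = (Real.exp y * (1 - y ^ 2)) ^ 2 ^ n := (mul_pow _ _ _).symm
      _ ≤ (1 + y) ^ 2 ^ n := pow_le_pow_left₀ hlpos hkey _
  have hbern : 1 - ((2 ^ n : ℕ) : ℝ) * y ^ 2 ≤ (1 - y ^ 2) ^ 2 ^ n := by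
    calc 1 - ((2 ^ n : ℕ) : ℝ) * y ^ 2 = 1 + ((2 ^ n : ℕ) : ℝ) * (-(y ^ 2)) := by ring
      _ ≤ (1 + -(y ^ 2)) ^ 2 ^ n := one_add_mul_le_pow (by nlinarith) (2 ^ n)
      _ = (1 - y ^ 2) ^ 2 ^ n := by ring_nf
  have hsmall : ((2 ^ n : ℕ) : ℝ) * y ^ 2 ≤ ε := by
    rw [hMcast, hy_def]
    have : m * (x / m) ^ 2 = x ^ 2 / m := by field_simp
    rw [this, div_le_iff₀ hm]
    nlinarith
  have hlower : Real.exp x * (1 - ε) ≤ (1 + y) ^ 2 ^ n := by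
    calc Real.exp x * (1 - ε)
        ≤ Real.exp x * (1 - ((2 ^ n : ℕ) : ℝ) * y ^ 2) :=
          mul_le_mul_of_nonneg_left (by linarith) (Real.exp_pos x).le
      _ ≤ Real.exp x * (1 - y ^ 2) ^ 2 ^ n := by
          have := Real.exp_pos x
          exact mul_le_mul_of_nonneg_left hbern this.le
      _ ≤ (1 + y) ^ 2 ^ n := hlower1
  rw [abs_le]
  constructor
  · linarith [hlower, (by ring : Real.exp x * (1 - ε) = Real.exp x - ε * Real.exp x)]
  · linarith [hupper, mul_pos hε0 (Real.exp_pos x)]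
end

section
/- Let y₀ be a real number with 0 < y₀ < √3 and define the sequence y_{k+1} = y_k·(3 - y_k²)/2 (the Newton–Schulz iteration for the sign function). Then the sequence y_k converges to 1. In particular, for 0 < x ≤ γ and starting value y₀ = x/γ, the iterates converge to sgn(x) = 1. -/
theorem newton_schulz_sign_tendsto_one (y : ℕ → ℝ)
    (h0 : 0 < y 0) (h1 : y 0 < Real.sqrt 3)
    (hrec : ∀ k, y (k + 1) = y k * (3 - y k ^ 2) / 2) :
    Filter.Tendsto y Filter.atTop (nhds 1) := by
  have h3 : (y 0) ^ 2 < 3 := by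
    have := Real.sq_sqrt (by norm_num : (3:ℝ) ≥ 0)
    nlinarith [Real.sqrt_nonneg 3]
  set z : ℕ → ℝ := fun k => y (k + 1) with hz
  -- invariant: 0 < z k ≤ 1
  have hinv : ∀ k, 0 < z k ∧ z k ≤ 1 := by
    intro k
    induction k with
    | zero =>
      constructor
      · have := hrec 0
        simp only [hz]
        rw [this]
        nlinarith
      · have := hrec 0
        simp only [hz]
        rw [this]
        nlinarith [sq_nonneg (y 0 - 1), mul_pos h0 h0]
    | succ n ih =>
      obtain ⟨hp, hle⟩ := ih
      have := hrec (n + 1)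
      simp only [hz] at *
      rw [this]
      constructor
      · nlinarith
      · nlinarith [sq_nonneg (y (n+1) - 1), mul_pos hp hp]
  have hmono : Monotone z := by
    apply monotone_nat_of_le_succ
    intro n
    obtain ⟨hp, hle⟩ := hinv n
    have := hrec (n + 1)
    simp only [hz] at *
    rw [this]
    nlinarith
  have hbdd : BddAbove (Set.range z) := by
    refine ⟨1, ?_⟩
    rintro x ⟨k, rfl⟩
    exact (hinv k).2
  have htend : Filter.Tendsto z Filter.atTop (nhds (⨆ k, z k)) :=
    tendsto_atTop_ciSup hmono hbdd
  set L := ⨆ k, z k with hL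
  have hL1 : L ≤ 1 := ciSup_le fun k => (hinv k).2
  have hL0 : 0 < L := lt_of_lt_of_le (hinv 0).1 (le_ciSup hbdd 0)
  -- L is a fixed point
  have htend' : Filter.Tendsto (fun k => z (k + 1)) Filter.atTop (nhds L) :=
    htend.comp (Filter.tendsto_add_atTop_nat 1)
  have htend'' : Filter.Tendsto (fun k => z k * (3 - z k ^ 2) / 2) Filter.atTop
      (nhds (L * (3 - L ^ 2) / 2)) := by
    exact ((htend.mul ((tendsto_const_nhds).sub (htend.pow 2))).div_const 2)
  have heq : ∀ k, z (k + 1) = z k * (3 - z k ^ 2) / 2 := fun k => hrec (k + 1)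
  have hfix : L = L * (3 - L ^ 2) / 2 := by
    apply tendsto_nhds_unique htend'
    exact htend''.congr fun k => (heq k).symm
  have : L = 1 := by nlinarith [mul_pos hL0 hL0]
  rw [this] at htend
  exact (Filter.tendsto_add_atTop_iff_nat 1).mp htend
end
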